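/- arXiv:1509.07980 — 7 statements merged into one kernel-verified Lean document; each statement's English description precedes it below -/
import Mathlib

section
/- Let A be a commutative integral residuated lattice, let a, b, z ∈ A and let m, n ≥ 1 be natural numbers. If a^m ≤ z and b^n ≤ z, then (a ∨ b)^(m+n−1) ≤ z. -/
/-- A commutative integral residuated lattice. -/
class CIRL (α : Type*) extends CommMonoid α, Lattice α, HImp α where
  residuation : ∀ x y z : α, x * y ≤ z ↔ y ≤ x ⇨ z
  le_one : ∀ x : α, x ≤ 1

/-!
Expanding `(a ⊔ b) ^ (m + n - 1)` by distributivity of multiplication over joins bounds it by the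
join of the monomials `a ^ i * b ^ (m + n - 1 - i)`. In each monomial either `i ≥ m` or the exponent
of `b` is at least `n`, and by integrality the monomial lies below `a ^ m` or `b ^ n` respectively.
-/

namespace CIRL

variable {α : Type*} [CIRL α]

theorem le_himp_mul (x y : α) : y ≤ x ⇨ x * y :=
  (residuation x y _).mp le_rfl

instance : IsOrderedMonoid α where
  mul_le_mul_left a b h c := by
    rw [mul_comm a, mul_comm b, residuation]
    exact h.trans (le_himp_mul c b)

theorem sup_mul (x y z : α) : (x ⊔ y) * z = x * z ⊔ y * z := by
  refine le_antisymm ?_ (sup_le (by gcongr; exact le_sup_left) (by gcongr; exact le_sup_right))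
  rw [mul_comm, residuation]
  refine sup_le ?_ ?_ <;> rw [← residuation, mul_comm]
  exacts [le_sup_left, le_sup_right]

/-- The induction generalizes `z`: residuation turns `a * p ≤ z` into `p ≤ a ⇨ z`. -/
theorem sup_pow_le_of_forall_mul_pow_le (a b : α) (k : ℕ) {z : α}
    (h : ∀ i ≤ k, a ^ i * b ^ (k - i) ≤ z) : (a ⊔ b) ^ k ≤ z := by
  induction k generalizing z with
  | zero => simpa using h 0 le_rfl
  | succ k ih =>
    rw [pow_succ', sup_mul]
    refine sup_le ((residuation _ _ _).mpr (ih fun i hi => ?_))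
      ((residuation _ _ _).mpr (ih fun i hi => ?_)) <;> rw [← residuation]
    · simpa [mul_assoc, pow_succ'] using h (i + 1) (by omega)
    · simpa [Nat.sub_add_comm hi, pow_succ', mul_left_comm] using h i (by omega)

theorem mul_pow_le_pow_of_le (a b : α) {i m : ℕ} (j : ℕ) (h : m ≤ i) : a ^ i * b ^ j ≤ a ^ m :=
  (mul_le_of_le_one_right' (pow_le_one' (le_one b) j)).trans
    (pow_le_pow_right_of_le_one' (le_one a) h)

end CIRL

theorem stmt1_general {α : Type*} [CIRL α] (a b z : α) (m n : ℕ)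
    (ha : a ^ m ≤ z) (hb : b ^ n ≤ z) : (a ⊔ b) ^ (m + n - 1) ≤ z := by
  refine CIRL.sup_pow_le_of_forall_mul_pow_le a b _ fun i _ => ?_
  rcases le_or_gt m i with hmi | him
  · exact (CIRL.mul_pow_le_pow_of_le a b _ hmi).trans ha
  · rw [mul_comm]
    exact (CIRL.mul_pow_le_pow_of_le b a i (by omega : n ≤ m + n - 1 - i)).trans hb

theorem stmt1 {α : Type*} [CIRL α] (a b z : α) (m n : ℕ) (hm : 1 ≤ m) (hn : 1 ≤ n)
    (ha : a ^ m ≤ z) (hb : b ^ n ≤ z) : (a ⊔ b) ^ (m + n - 1) ≤ z :=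
  stmt1_general a b z m n ha hb
end

section
/- Let k ≥ 1 and let A be a k-potent commutative integral residuated lattice. If there exists a ∈ A with a ≠ 1 such that b^k ≤ a for every b ∈ A with b ≠ 1, then A is well-connected, i.e., for all x, y ∈ A, x ∨ y = 1 implies x = 1 or y = 1. -/
namespace CIRL

variable {α : Type*} [CIRL α]

theorem mul_le_mul_of_le (x : α) {y z : α} (h : y ≤ z) : x * y ≤ x * z :=
  (residuation x y (x * z)).mpr (h.trans ((residuation x z (x * z)).mp le_rfl))

theorem mul_le_of_le_one_left (x y : α) : x * y ≤ y := by
  rw [mul_comm]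
  simpa using mul_le_mul_of_le y (le_one x)

theorem mul_sup (x y z : α) : x * (y ⊔ z) = x * y ⊔ x * z := by
  refine le_antisymm ?_ (sup_le (mul_le_mul_of_le x le_sup_left) (mul_le_mul_of_le x le_sup_right))
  rw [residuation]
  exact sup_le ((residuation x y _).mp le_sup_left) ((residuation x z _).mp le_sup_right)

theorem sup_mul_eq_one {x y z : α} (hy : x ⊔ y = 1) (hz : x ⊔ z = 1) : x ⊔ y * z = 1 := by
  refine le_antisymm (le_one _) ?_
  calc (1 : α) = (x ⊔ y) * (x ⊔ z) := by rw [hy, hz, one_mul]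
    _ = x * (x ⊔ z) ⊔ (y * x ⊔ y * z) := by
      rw [mul_comm, mul_sup, mul_comm, mul_comm (x ⊔ z) y, ← mul_sup]
    _ ≤ x ⊔ y * z :=
      sup_le (le_sup_of_le_left (mul_comm (x ⊔ z) x ▸ mul_le_of_le_one_left (x ⊔ z) x))
        (sup_le_sup_right (mul_le_of_le_one_left y x) _)

theorem sup_pow_eq_one {x y : α} (h : x ⊔ y = 1) (n : ℕ) : x ⊔ y ^ n = 1 := by
  induction n with
  | zero => exact le_antisymm (le_one _) (by simp)
  | succ n ih => rw [pow_succ]; exact sup_mul_eq_one ih h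

theorem pow_sup_pow_eq_one {x y : α} (h : x ⊔ y = 1) (m n : ℕ) : x ^ m ⊔ y ^ n = 1 := by
  have hm : y ^ n ⊔ x = 1 := by rw [sup_comm]; exact sup_pow_eq_one h n
  rw [sup_comm]
  exact sup_pow_eq_one hm m

end CIRL

theorem stmt3_general {α : Type*} [CIRL α] (k : ℕ)
    (a : α) (ha : a ≠ 1) (hcrit : ∀ b : α, b ≠ 1 → b ^ k ≤ a) :
    ∀ x y : α, x ⊔ y = 1 → x = 1 ∨ y = 1 := by
  intro x y hxy
  by_contra! hne
  have h_one_le : (1 : α) ≤ a := by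
    rw [← CIRL.pow_sup_pow_eq_one hxy k k]
    exact sup_le (hcrit x hne.1) (hcrit y hne.2)
  exact ha (le_antisymm (CIRL.le_one a) h_one_le)

theorem stmt3 {α : Type*} [CIRL α] (k : ℕ) (hk : 1 ≤ k)
    (hpot : ∀ x : α, x ^ (k + 1) = x ^ k)
    (a : α) (ha : a ≠ 1) (hcrit : ∀ b : α, b ≠ 1 → b ^ k ≤ a) :
    ∀ x y : α, x ⊔ y = 1 → x = 1 ∨ y = 1 :=
  stmt3_general k a ha hcrit
end

section
/- Let k ≥ 1 and let B be a commutative k-potent i-semiring, i.e., (B, ·, 1) is a commutative monoid, (B, ∨) is a join-semilattice, x·(y ∨ z) = (x·y) ∨ (x·z) for all x, y, z, and x^(k+1) = x^k for all x. Then for every finite subset S of B with |S| = n, the smallest subset of B containing S ∪ {1} and closed under · and ∨ is finite and has at most 2^((k+1)^n) elements. -/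
/-!
Exponents saturate at `k`, so every product of the generators is one of the at most `(k + 1) ^ n`
monomials `∏ s ^ e s` with `e s ≤ k`. By distributivity, the finite joins of these monomials are
closed under multiplication, hence form a sub-i-semiring containing `S`; it contains the generated
one, and it has at most `2 ^ ((k + 1) ^ n)` elements because a join of generators is determined
by the set of generators below it.
-/

open Finset

/-- A commutative i-semiring: a commutative monoid with a join-semilattice structure
such that multiplication distributes over binary joins. -/
class ISemiring (β : Type*) extends CommMonoid β, SemilatticeSup β where
  mul_sup : ∀ x y z : β, x * (y ⊔ z) = (x * y) ⊔ (x * z)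

lemma Set.ncard_supClosure_le {α : Type*} [SemilatticeSup α] (s : Finset α) :
    (supClosure (s : Set α)).ncard ≤ 2 ^ s.card := by
  classical
  have sup'_generators_below : ∀ x ∈ supClosure (s : Set α), ∃ h : {a ∈ s | a ≤ x}.Nonempty,
      {a ∈ s | a ≤ x}.sup' h id = x := by
    rintro _ ⟨t, ht, hts, rfl⟩
    have hsub : t ⊆ {a ∈ s | a ≤ t.sup' ht id} := fun a ha =>
      mem_filter.2 ⟨hts ha, le_sup' id ha⟩
    exact ⟨ht.mono hsub, le_antisymm (sup'_le _ _ fun a ha => (mem_filter.1 ha).2)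
      (sup'_mono id hsub ht)⟩
  calc (supClosure (s : Set α)).ncard ≤ (s.powerset : Set (Finset α)).ncard := by
        refine Set.ncard_le_ncard_of_injOn (fun x => {a ∈ s | a ≤ x})
          (fun x _ => Finset.mem_powerset.2 (filter_subset _ _)) fun x hx y hy hxy => ?_
        obtain ⟨hx', hx_eq⟩ := sup'_generators_below x hx
        obtain ⟨hy', hy_eq⟩ := sup'_generators_below y hy
        rw [← hx_eq, ← hy_eq]
        exact sup'_congr hx' hxy fun _ _ => rfl
    _ = 2 ^ s.card := by rw [Set.ncard_coe_finset, card_powerset]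

lemma pow_eq_pow_min_of_pow_succ_eq {M : Type*} [Monoid M] {x : M} {k : ℕ}
    (hx : x ^ (k + 1) = x ^ k) (m : ℕ) : x ^ m = x ^ min m k := by
  rcases le_total m k with hmk | hkm
  · rw [min_eq_left hmk]
  · obtain ⟨d, rfl⟩ := Nat.exists_eq_add_of_le hkm
    rw [min_eq_right hkm]
    induction d with
    | zero => rfl
    | succ d ih => rw [← add_assoc, pow_succ, ih (by omega), ← pow_succ, hx]

section Monomials

variable {M : Type*} [CommMonoid M] [DecidableEq M]

def boundedMonomials (S : Finset M) (k : ℕ) : Finset M :=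
  univ.image fun e : S → Fin (k + 1) => ∏ s : S, (s : M) ^ (e s : ℕ)

lemma card_boundedMonomials_le (S : Finset M) (k : ℕ) :
    (boundedMonomials S k).card ≤ (k + 1) ^ S.card :=
  card_image_le.trans (by simp)

lemma one_mem_boundedMonomials (S : Finset M) (k : ℕ) : (1 : M) ∈ boundedMonomials S k :=
  mem_image.2 ⟨0, mem_univ _, by simp⟩

variable {k : ℕ}

lemma prod_pow_mem_boundedMonomials (hpot : ∀ x : M, x ^ (k + 1) = x ^ k) (S : Finset M)
    (e : S → ℕ) :
    ∏ s : S, (s : M) ^ e s ∈ boundedMonomials S k := by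
  refine mem_image.2 ⟨fun s => ⟨min (e s) k, by omega⟩, mem_univ _, ?_⟩
  exact prod_congr rfl fun s _ => (pow_eq_pow_min_of_pow_succ_eq (hpot s) (e s)).symm

lemma subset_boundedMonomials (hpot : ∀ x : M, x ^ (k + 1) = x ^ k) (S : Finset M) :
    (S : Set M) ⊆ boundedMonomials S k := by
  intro s hs
  simpa [Fintype.prod_ite_eq'] using
    prod_pow_mem_boundedMonomials hpot S fun t => if t = ⟨s, hs⟩ then 1 else 0

lemma mul_mem_boundedMonomials (hpot : ∀ x : M, x ^ (k + 1) = x ^ k) (S : Finset M) {x y : M}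
    (hx : x ∈ boundedMonomials S k) (hy : y ∈ boundedMonomials S k) :
    x * y ∈ boundedMonomials S k := by
  obtain ⟨e, -, rfl⟩ := mem_image.1 hx
  obtain ⟨f, -, rfl⟩ := mem_image.1 hy
  simpa [← prod_mul_distrib, ← pow_add] using
    prod_pow_mem_boundedMonomials hpot S fun s => (e s : ℕ) + f s

end Monomials

section ISemiring

variable {β : Type*} [ISemiring β]

lemma ISemiring.mul_sup' {ι : Type*} (x : β) {t : Finset ι} (ht : t.Nonempty) (f : ι → β) :
    x * t.sup' ht f = t.sup' ht fun i => x * f i :=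
  apply_sup'_eq_sup'_comp ht (x * ·) (ISemiring.mul_sup x)

lemma ISemiring.mul_mem_supClosure {s : Set β} (hs : ∀ x ∈ s, ∀ y ∈ s, x * y ∈ s)
    {x y : β} (hx : x ∈ supClosure s) (hy : y ∈ supClosure s) : x * y ∈ supClosure s := by
  obtain ⟨t, ht, hts, rfl⟩ := hx
  obtain ⟨u, hu, hus, rfl⟩ := hy
  rw [mul_comm, mul_sup']
  refine supClosed_supClosure.finsetSup'_mem ht fun a ha => ?_
  rw [mul_comm, mul_sup']
  exact finsetSup'_mem_supClosure hu fun b hb => hs a (hts ha) b (hus hb)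

def IsISubsemiringContaining (S T : Set β) : Prop :=
  S ⊆ T ∧ (1 : β) ∈ T ∧ (∀ x ∈ T, ∀ y ∈ T, x * y ∈ T) ∧ ∀ x ∈ T, ∀ y ∈ T, x ⊔ y ∈ T

lemma IsISubsemiringContaining.sInter {S : Set β} {𝒯 : Set (Set β)}
    (h : ∀ T ∈ 𝒯, IsISubsemiringContaining S T) : IsISubsemiringContaining S (⋂₀ 𝒯) :=
  ⟨fun _ hx T hT => (h T hT).1 hx, fun T hT => (h T hT).2.1,
    fun _ hx _ hy T hT => (h T hT).2.2.1 _ (hx T hT) _ (hy T hT),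
    fun _ hx _ hy T hT => (h T hT).2.2.2 _ (hx T hT) _ (hy T hT)⟩

lemma isISubsemiringContaining_supClosure {S M : Set β} (hSM : S ⊆ M) (hone : (1 : β) ∈ M)
    (hmul : ∀ x ∈ M, ∀ y ∈ M, x * y ∈ M) : IsISubsemiringContaining S (supClosure M) :=
  ⟨hSM.trans subset_supClosure, subset_supClosure hone,
    fun _ hx _ hy => ISemiring.mul_mem_supClosure hmul hx hy,
    fun _ hx _ hy => supClosed_supClosure hx hy⟩

end ISemiring

theorem stmt4_general {β : Type*} [ISemiring β] (k : ℕ)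
    (hpot : ∀ x : β, x ^ (k + 1) = x ^ k) (S : Finset β) (n : ℕ) (hS : S.card = n) :
    ∃ T : Set β,
      ((↑S : Set β) ⊆ T ∧ (1 : β) ∈ T ∧ (∀ x ∈ T, ∀ y ∈ T, x * y ∈ T) ∧
        (∀ x ∈ T, ∀ y ∈ T, x ⊔ y ∈ T)) ∧
      (∀ T' : Set β,
        ((↑S : Set β) ⊆ T' ∧ (1 : β) ∈ T' ∧ (∀ x ∈ T', ∀ y ∈ T', x * y ∈ T') ∧
          (∀ x ∈ T', ∀ y ∈ T', x ⊔ y ∈ T')) → T ⊆ T') ∧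
      T.Finite ∧ T.ncard ≤ 2 ^ ((k + 1) ^ n) := by
  classical
  set U := supClosure (boundedMonomials S k : Set β)
  have hU : IsISubsemiringContaining (S : Set β) U :=
    isISubsemiringContaining_supClosure (subset_boundedMonomials hpot S)
      (one_mem_boundedMonomials S k) fun _ hx _ hy => mul_mem_boundedMonomials hpot S hx hy
  set T := ⋂₀ {T' | IsISubsemiringContaining (S : Set β) T'}
  have hTU : T ⊆ U := Set.sInter_subset_of_mem hU
  have hU_finite : U.Finite := (boundedMonomials S k).finite_toSet.supClosure
  refine ⟨T, IsISubsemiringContaining.sInter fun _ h => h,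
    fun _ hT' => Set.sInter_subset_of_mem hT', hU_finite.subset hTU, ?_⟩
  calc T.ncard ≤ U.ncard := Set.ncard_le_ncard hTU hU_finite
    _ ≤ 2 ^ (boundedMonomials S k).card := Set.ncard_supClosure_le _
    _ ≤ 2 ^ ((k + 1) ^ n) := Nat.pow_le_pow_right two_pos (hS ▸ card_boundedMonomials_le S k)

theorem stmt4 {β : Type*} [ISemiring β] (k : ℕ) (hk : 1 ≤ k)
    (hpot : ∀ x : β, x ^ (k + 1) = x ^ k) (S : Finset β) (n : ℕ) (hS : S.card = n) :
    ∃ T : Set β,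
      ((↑S : Set β) ⊆ T ∧ (1 : β) ∈ T ∧ (∀ x ∈ T, ∀ y ∈ T, x * y ∈ T) ∧
        (∀ x ∈ T, ∀ y ∈ T, x ⊔ y ∈ T)) ∧
      (∀ T' : Set β,
        ((↑S : Set β) ⊆ T' ∧ (1 : β) ∈ T' ∧ (∀ x ∈ T', ∀ y ∈ T', x * y ∈ T') ∧
          (∀ x ∈ T', ∀ y ∈ T', x ⊔ y ∈ T')) → T ⊆ T') ∧
      T.Finite ∧ T.ncard ≤ 2 ^ ((k + 1) ^ n) :=
  stmt4_general k hpot S n hS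
end

section
/- Let k ≥ 1, let B be a k-potent commutative integral residuated lattice, and let g, x ∈ B be such that g^k ≰ x. Then there exist a k-potent commutative integral residuated lattice C having a second-greatest element and a surjective map q : B → C preserving ·, ∧, ∨, →, and 1 such that q(g) = 1 and q(x) ≠ 1. -/
/-!
By Zorn's lemma, extend the principal filter of the idempotent `g ^ k` to a filter `F` maximal
among the filters avoiding `x`, and let `C = B / F`. For `z ∉ F`, k-potency makes
`{y | f * z ^ k ≤ y for some f ∈ F}` the filter generated by `F` and `z`, so by maximality it
contains `x`; hence `Y ^ k ≤ q x < 1` for every `Y ≠ 1` in `C`. As `a ⊔ b = 1` forces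
`a ^ k ⊔ b ^ k = 1`, the elements `≠ 1` are closed under `⊔`, and lowering `n` in the bound
`Y ^ n ≤ q x` until it fails at some `w` makes `w ^ n ⇨ q x` the second-greatest element.
-/

universe u

namespace CIRL

variable {A : Type*} [CIRL A] {a b c : A}

theorem le_himp_iff_mul_le : b ≤ a ⇨ c ↔ a * b ≤ c := (residuation a b c).symm

instance : IsOrderedMonoid A where
  mul_le_mul_left a b h c := by
    rw [mul_comm a, mul_comm b, ← le_himp_iff_mul_le]
    exact h.trans (le_himp_iff_mul_le.mpr le_rfl)

theorem mul_le_left (a b : A) : a * b ≤ a := mul_le_of_le_one_right' (le_one b)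

theorem mul_le_right (a b : A) : a * b ≤ b := mul_le_of_le_one_left' (le_one a)

theorem pow_le_self (a : A) {k : ℕ} (hk : 1 ≤ k) : a ^ k ≤ a :=
  (pow_le_pow_right_of_le_one' (le_one a) hk).trans_eq (pow_one a)

theorem mul_himp_le (a b : A) : a * (a ⇨ b) ≤ b := le_himp_iff_mul_le.mp le_rfl

theorem one_le_himp_iff : 1 ≤ a ⇨ b ↔ a ≤ b := by
  rw [le_himp_iff_mul_le, mul_one]

theorem himp_mul_himp_le (a b c : A) : (a ⇨ b) * (b ⇨ c) ≤ a ⇨ c :=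
  le_himp_iff_mul_le.mpr <| calc
    a * ((a ⇨ b) * (b ⇨ c)) = a * (a ⇨ b) * (b ⇨ c) := (mul_assoc ..).symm
    _ ≤ b * (b ⇨ c) := mul_le_mul_left (mul_himp_le a b) _
    _ ≤ c := mul_himp_le b c

theorem mul_himp (a b c : A) : a * b ⇨ c = b ⇨ a ⇨ c := by
  refine le_antisymm ?_ ?_ <;> rw [le_himp_iff_mul_le]
  · rw [le_himp_iff_mul_le, ← mul_assoc]
    exact mul_himp_le _ _
  · calc a * b * (b ⇨ a ⇨ c) = a * (b * (b ⇨ a ⇨ c)) := mul_assoc ..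
      _ ≤ a * (a ⇨ c) := mul_le_mul_right (mul_himp_le _ _) a
      _ ≤ c := mul_himp_le a c

theorem himp_inf (a b c : A) : a ⇨ b ⊓ c = (a ⇨ b) ⊓ (a ⇨ c) := by
  refine le_antisymm (le_inf ?_ ?_) ?_
  · exact le_himp_iff_mul_le.mpr ((mul_himp_le a _).trans inf_le_left)
  · exact le_himp_iff_mul_le.mpr ((mul_himp_le a _).trans inf_le_right)
  · exact le_himp_iff_mul_le.mpr (le_inf
      ((mul_le_mul_right inf_le_left a).trans (mul_himp_le a b))
      ((mul_le_mul_right inf_le_right a).trans (mul_himp_le a c)))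

theorem mul_sup_s13 (a b c : A) : a * (b ⊔ c) = a * b ⊔ a * c := by
  refine le_antisymm ?_ <|
    sup_le (mul_le_mul_right le_sup_left a) (mul_le_mul_right le_sup_right a)
  rw [← le_himp_iff_mul_le]
  exact sup_le (le_himp_iff_mul_le.mpr le_sup_left) (le_himp_iff_mul_le.mpr le_sup_right)

theorem sup_mul_s13 (a b c : A) : (a ⊔ b) * c = a * c ⊔ b * c := by
  simp only [mul_comm _ c, mul_sup_s13]

theorem sup_mul_eq_one_s13 (hb : a ⊔ b = 1) (hc : a ⊔ c = 1) : a ⊔ b * c = 1 := by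
  refine le_antisymm (le_one _) ?_
  calc (1 : A) = (a ⊔ b) * (a ⊔ c) := by rw [hb, hc, mul_one]
    _ = a * (a ⊔ c) ⊔ (b * a ⊔ b * c) := by rw [sup_mul_s13, mul_sup_s13 b]
    _ ≤ a ⊔ b * c := sup_le (le_sup_of_le_left (mul_le_left _ _))
        (sup_le (le_sup_of_le_left (mul_le_right _ _)) le_sup_right)

theorem sup_pow_eq_one_right (h : a ⊔ b = 1) (n : ℕ) : a ⊔ b ^ n = 1 := by
  induction n with
  | zero => simpa using sup_eq_right.mpr (le_one a)
  | succ n ih => rw [pow_succ]; exact sup_mul_eq_one_s13 ih h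

theorem sup_pow_eq_one_s13 (h : a ⊔ b = 1) (m n : ℕ) : a ^ m ⊔ b ^ n = 1 := by
  rw [sup_comm]
  exact sup_pow_eq_one_right (by rw [sup_comm]; exact sup_pow_eq_one_right h n) m


theorem sup_ne_one_of_pow_le {c : A} (hc : c ≠ 1) {n : ℕ} (h : ∀ y : A, y ≠ 1 → y ^ n ≤ c)
    (ha : a ≠ 1) (hb : b ≠ 1) : a ⊔ b ≠ 1 := fun hab =>
  hc <| le_antisymm (le_one c) <| (sup_pow_eq_one_s13 hab n n).ge.trans (sup_le (h a ha) (h b hb))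

theorem exists_second_greatest_of_pow_le {c : A} (hc : c ≠ 1) :
    ∀ n : ℕ, (∀ y : A, y ≠ 1 → y ^ n ≤ c) → ∃ s : A, s ≠ 1 ∧ ∀ y : A, y ≠ 1 → y ≤ s
  | 0, h => absurd (le_antisymm (le_one c) (by simpa using h c hc)) hc
  | n + 1, h => by
    by_cases hn : ∀ y : A, y ≠ 1 → y ^ n ≤ c
    · exact exists_second_greatest_of_pow_le hc n hn
    push Not at hn
    obtain ⟨w, hw, hwc⟩ := hn
    refine ⟨w ^ n ⇨ c, fun h1 => hwc (one_le_himp_iff.mp h1.ge), fun y hy => ?_⟩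
    rw [le_himp_iff_mul_le]
    calc w ^ n * y ≤ (w ⊔ y) ^ n * (w ⊔ y) :=
          mul_le_mul' (pow_le_pow_left' le_sup_left n) le_sup_right
      _ = (w ⊔ y) ^ (n + 1) := (pow_succ ..).symm
      _ ≤ c := h _ (sup_ne_one_of_pow_le hc h hw hy)

structure IsFilter (F : Set A) : Prop where
  one_mem : (1 : A) ∈ F
  mul_mem {a b : A} : a ∈ F → b ∈ F → a * b ∈ F
  mem_of_le {a b : A} : a ∈ F → a ≤ b → b ∈ F

theorem isFilter_Ici {e : A} (he : e * e = e) : IsFilter (Set.Ici e) where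
  one_mem := le_one e
  mul_mem ha hb := he ▸ mul_le_mul' ha hb
  mem_of_le ha hab := ha.trans hab

theorem IsFilter.sUnion_of_isChain {S : Set (Set A)} (hS : ∀ F ∈ S, IsFilter F)
    (hchain : IsChain (· ⊆ ·) S) (hne : S.Nonempty) : IsFilter (⋃₀ S) where
  one_mem := hne.elim fun F hF => ⟨F, hF, (hS F hF).one_mem⟩
  mul_mem := by
    rintro a b ⟨F, hF, ha⟩ ⟨G, hG, hb⟩
    rcases hchain.total hF hG with hFG | hGF
    · exact ⟨G, hG, (hS G hG).mul_mem (hFG ha) hb⟩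
    · exact ⟨F, hF, (hS F hF).mul_mem ha (hGF hb)⟩
  mem_of_le := by
    rintro a b ⟨F, hF, ha⟩ hab
    exact ⟨F, hF, (hS F hF).mem_of_le ha hab⟩

theorem exists_maximal_filter_notMem {F₀ : Set A} (hF₀ : IsFilter F₀) {x : A} (hx : x ∉ F₀) :
    ∃ F, F₀ ⊆ F ∧ Maximal (fun G => IsFilter G ∧ x ∉ G) F := by
  refine zorn_subset_nonempty _ (fun S hS hchain hne => ?_) F₀ ⟨hF₀, hx⟩
  refine ⟨⋃₀ S, ⟨IsFilter.sUnion_of_isChain (fun F hF => (hS hF).1) hchain hne, ?_⟩,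
    fun F hF => Set.subset_sUnion_of_mem hF⟩
  rintro ⟨F, hF, hxF⟩
  exact (hS hF).2 hxF

theorem one_himp (a : A) : 1 ⇨ a = a :=
  le_antisymm (by simpa using mul_himp_le 1 a) (le_himp_iff_mul_le.mpr (one_mul a).le)

theorem himp_mul_himp_le_mul_himp_mul (a a' b b' : A) :
    (a ⇨ a') * (b ⇨ b') ≤ a * b ⇨ a' * b' :=
  le_himp_iff_mul_le.mpr <| calc
    a * b * ((a ⇨ a') * (b ⇨ b')) = a * (a ⇨ a') * (b * (b ⇨ b')) := by ac_rfl
    _ ≤ a' * b' := mul_le_mul' (mul_himp_le a a') (mul_himp_le b b')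

theorem himp_mul_himp_le_sup_himp_sup (a a' b b' : A) :
    (a ⇨ a') * (b ⇨ b') ≤ a ⊔ b ⇨ a' ⊔ b' := by
  rw [le_himp_iff_mul_le, sup_mul_s13]
  refine sup_le (le_sup_of_le_left ?_) (le_sup_of_le_right ?_)
  · exact (mul_assoc a _ _).symm.le.trans ((mul_le_left _ _).trans (mul_himp_le a a'))
  · rw [mul_left_comm]; exact (mul_le_right _ _).trans (mul_himp_le b b')

theorem himp_mul_himp_le_inf_himp_inf (a a' b b' : A) :
    (a ⇨ a') * (b ⇨ b') ≤ a ⊓ b ⇨ a' ⊓ b' := by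
  rw [le_himp_iff_mul_le]
  refine le_inf ?_ ?_
  · calc (a ⊓ b) * ((a ⇨ a') * (b ⇨ b')) ≤ a * (a ⇨ a') * (b ⇨ b') := by
          rw [mul_assoc]; exact mul_le_mul_left inf_le_left _
      _ ≤ a' := (mul_le_left _ _).trans (mul_himp_le a a')
  · calc (a ⊓ b) * ((a ⇨ a') * (b ⇨ b')) ≤ b * (b ⇨ b') * (a ⇨ a') := by
          rw [mul_comm (a ⇨ a'), ← mul_assoc]
          exact mul_le_mul_left (mul_le_mul_left inf_le_right _) _
      _ ≤ b' := (mul_le_left _ _).trans (mul_himp_le b b')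

theorem himp_mul_himp_le_himp_himp_himp (a a' b b' : A) :
    (a' ⇨ a) * (b ⇨ b') ≤ (a ⇨ b) ⇨ a' ⇨ b' := by
  rw [le_himp_iff_mul_le, le_himp_iff_mul_le]
  calc a' * ((a ⇨ b) * ((a' ⇨ a) * (b ⇨ b')))
        = a' * (a' ⇨ a) * (a ⇨ b) * (b ⇨ b') := by ac_rfl
    _ ≤ a * (a ⇨ b) * (b ⇨ b') := mul_le_mul_left (mul_le_mul_left (mul_himp_le a' a) _) _
    _ ≤ b * (b ⇨ b') := mul_le_mul_left (mul_himp_le a b) _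
    _ ≤ b' := mul_himp_le b b'

namespace IsFilter

variable {F : Set A} (hF : IsFilter F)
include hF

theorem himp_mem_of_le (h : a ≤ b) : a ⇨ b ∈ F :=
  hF.mem_of_le hF.one_mem (one_le_himp_iff.mpr h)

theorem himp_mem_trans (hab : a ⇨ b ∈ F) (hbc : b ⇨ c ∈ F) : a ⇨ c ∈ F :=
  hF.mem_of_le (hF.mul_mem hab hbc) (himp_mul_himp_le a b c)

theorem sup_mul_idempotent {e : A} (he : e * e = e) : IsFilter {y | ∃ f ∈ F, f * e ≤ y} where
  one_mem := ⟨1, hF.one_mem, le_one _⟩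
  mul_mem := by
    rintro a b ⟨f, hf, hfa⟩ ⟨f', hf', hfb⟩
    refine ⟨f * f', hF.mul_mem hf hf', ?_⟩
    calc f * f' * e = f * e * (f' * e) := by rw [mul_mul_mul_comm, he]
      _ ≤ a * b := mul_le_mul' hfa hfb
  mem_of_le := by
    rintro a b ⟨f, hf, hfa⟩ hab
    exact ⟨f, hf, hfa.trans hab⟩

theorem rel_of_himp_mul_himp_le {op : A → A → A}
    (hop : ∀ a a' b b' : A, (a ⇨ a') * (b ⇨ b') ≤ op a b ⇨ op a' b') {a a' b b' : A}
    (ha : a ⇨ a' ∈ F ∧ a' ⇨ a ∈ F) (hb : b ⇨ b' ∈ F ∧ b' ⇨ b ∈ F) :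
    op a b ⇨ op a' b' ∈ F ∧ op a' b' ⇨ op a b ∈ F :=
  ⟨hF.mem_of_le (hF.mul_mem ha.1 hb.1) (hop ..), hF.mem_of_le (hF.mul_mem ha.2 hb.2) (hop ..)⟩

def con : Con A where
  r a b := a ⇨ b ∈ F ∧ b ⇨ a ∈ F
  iseqv.refl _ := ⟨hF.himp_mem_of_le le_rfl, hF.himp_mem_of_le le_rfl⟩
  iseqv.symm h := h.symm
  iseqv.trans h₁ h₂ := ⟨hF.himp_mem_trans h₁.1 h₂.1, hF.himp_mem_trans h₂.2 h₁.2⟩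
  mul' := hF.rel_of_himp_mul_himp_le himp_mul_himp_le_mul_himp_mul

instance : Max hF.con.Quotient :=
  ⟨Quotient.map₂ (· ⊔ ·) fun _ _ ha _ _ hb =>
    hF.rel_of_himp_mul_himp_le himp_mul_himp_le_sup_himp_sup ha hb⟩

instance : Min hF.con.Quotient :=
  ⟨Quotient.map₂ (· ⊓ ·) fun _ _ ha _ _ hb =>
    hF.rel_of_himp_mul_himp_le himp_mul_himp_le_inf_himp_inf ha hb⟩

instance : HImp hF.con.Quotient :=
  ⟨Quotient.map₂ (· ⇨ ·) fun _ _ ha _ _ hb =>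
    ⟨hF.mem_of_le (hF.mul_mem ha.2 hb.1) (himp_mul_himp_le_himp_himp_himp ..),
      hF.mem_of_le (hF.mul_mem ha.1 hb.2) (himp_mul_himp_le_himp_himp_himp ..)⟩⟩

instance : Lattice hF.con.Quotient :=
  Lattice.mk'
    (fun X Y => Con.induction_on₂ X Y fun a b => congrArg _ (sup_comm a b))
    (fun X Y Z => Con.induction_on₂ X Y fun a b =>
      Con.induction_on Z fun c => congrArg _ (sup_assoc a b c))
    (fun X Y => Con.induction_on₂ X Y fun a b => congrArg _ (inf_comm a b))
    (fun X Y Z => Con.induction_on₂ X Y fun a b =>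
      Con.induction_on Z fun c => congrArg _ (inf_assoc a b c))
    (fun X Y => Con.induction_on₂ X Y fun _ _ => congrArg _ sup_inf_self)
    (fun X Y => Con.induction_on₂ X Y fun _ _ => congrArg _ inf_sup_self)

theorem coe_le_coe_iff : (a : hF.con.Quotient) ≤ b ↔ a ⇨ b ∈ F := by
  rw [← inf_eq_left]
  change ((a ⊓ b : A) : hF.con.Quotient) = a ↔ _
  rw [Con.eq]
  refine ⟨fun h => hF.mem_of_le h.2 ?_,
    fun h => ⟨hF.himp_mem_of_le inf_le_left, hF.mem_of_le h ?_⟩⟩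
  · rw [himp_inf]; exact inf_le_right
  · rw [himp_inf]; exact le_inf ((le_one _).trans (one_le_himp_iff.mpr le_rfl)) le_rfl

instance : CIRL hF.con.Quotient where
  residuation X Y Z := Con.induction_on₂ X Y fun a b => Con.induction_on Z fun c => by
    change (↑(a * b) : hF.con.Quotient) ≤ c ↔ (b : hF.con.Quotient) ≤ ↑(a ⇨ c)
    rw [hF.coe_le_coe_iff, hF.coe_le_coe_iff, mul_himp]
  le_one X := Con.induction_on X fun a => by
    change (a : hF.con.Quotient) ≤ ↑(1 : A)
    exact (hF.coe_le_coe_iff).mpr (hF.himp_mem_of_le (le_one a))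

theorem coe_eq_one_iff : (a : hF.con.Quotient) = 1 ↔ a ∈ F := by
  rw [← Con.coe_one, Con.eq]
  change _ ∧ 1 ⇨ a ∈ F ↔ _
  rw [one_himp]
  exact ⟨And.right, fun ha => ⟨hF.himp_mem_of_le (le_one a), ha⟩⟩

theorem coe_le_coe (h : a ≤ b) : (a : hF.con.Quotient) ≤ b :=
  hF.coe_le_coe_iff.mpr (hF.himp_mem_of_le h)

end IsFilter

section Potent

variable {k : ℕ} (hpot : ∀ y : A, y ^ (k + 1) = y ^ k)
include hpot

theorem pow_mul_pow_self_of_potent (a : A) : a ^ k * a ^ k = a ^ k := by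
  suffices h : ∀ n, a ^ k * a ^ n = a ^ k from h k
  intro n
  induction n with
  | zero => rw [pow_zero, mul_one]
  | succ n ih => rw [pow_succ, ← mul_assoc, ih, ← pow_succ, hpot]

theorem IsFilter.quotient_pow_succ {F : Set A} (hF : IsFilter F) (Y : hF.con.Quotient) :
    Y ^ (k + 1) = Y ^ k :=
  Con.induction_on Y fun a => congrArg ((↑) : A → hF.con.Quotient) (hpot a)

theorem exists_mul_pow_le_of_maximal (hk : 1 ≤ k) {F : Set A} {x z : A}
    (hmax : Maximal (fun G => IsFilter G ∧ x ∉ G) F) (hz : z ∉ F) : ∃ f ∈ F, f * z ^ k ≤ x := by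
  by_contra hx
  have hG := hmax.prop.1.sup_mul_idempotent (pow_mul_pow_self_of_potent hpot z)
  refine hz (hmax.le_of_ge ⟨hG, hx⟩ (fun f hf => ⟨f, hf, mul_le_left f _⟩) ?_)
  exact ⟨1, hmax.prop.1.one_mem, (one_mul _).trans_le (pow_le_self z hk)⟩

theorem pow_le_coe_of_maximal (hk : 1 ≤ k) {F : Set A} {x : A}
    (hmax : Maximal (fun G => IsFilter G ∧ x ∉ G) F) (Y : hmax.prop.1.con.Quotient) (hY : Y ≠ 1) :
    Y ^ k ≤ x := by
  induction Y using Con.induction_on with | H z => ?_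
  have hF := hmax.prop.1
  obtain ⟨f, hf, hfz⟩ := exists_mul_pow_le_of_maximal hpot hk hmax (mt hF.coe_eq_one_iff.mpr hY)
  calc (z : hF.con.Quotient) ^ k = (f : hF.con.Quotient) * ↑(z ^ k) := by
        rw [hF.coe_eq_one_iff.mpr hf, one_mul]; rfl
    _ ≤ x := hF.coe_le_coe hfz

end Potent

end CIRL

theorem stmt13 {B : Type u} [CIRL B] (k : ℕ) (hk : 1 ≤ k)
    (hpot : ∀ x : B, x ^ (k + 1) = x ^ k) (g x : B) (hgx : ¬ g ^ k ≤ x) :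
    ∃ (C : Type u) (inst : CIRL C),
      letI := inst
      (∀ y : C, y ^ (k + 1) = y ^ k) ∧
      (∃ s : C, s ≠ 1 ∧ ∀ y : C, y ≠ 1 → y ≤ s) ∧
      ∃ q : B → C, Function.Surjective q ∧
        (∀ a b : B, q (a * b) = q a * q b) ∧
        (∀ a b : B, q (a ⊓ b) = q a ⊓ q b) ∧
        (∀ a b : B, q (a ⊔ b) = q a ⊔ q b) ∧
        (∀ a b : B, q (a ⇨ b) = q a ⇨ q b) ∧
        q 1 = 1 ∧ q g = 1 ∧ q x ≠ 1 := by
  obtain ⟨F, hgF, hmax⟩ := CIRL.exists_maximal_filter_notMem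
    (CIRL.isFilter_Ici (CIRL.pow_mul_pow_self_of_potent hpot g)) hgx
  have hF : CIRL.IsFilter F := hmax.prop.1
  have hx : ((x : B) : hF.con.Quotient) ≠ 1 := mt hF.coe_eq_one_iff.mp hmax.prop.2
  have hg : ((g : B) : hF.con.Quotient) = 1 :=
    hF.coe_eq_one_iff.mpr (hgF (CIRL.pow_le_self g hk))
  exact ⟨hF.con.Quotient, inferInstance, hF.quotient_pow_succ hpot,
    CIRL.exists_second_greatest_of_pow_le hx k (CIRL.pow_le_coe_of_maximal hpot hk hmax), (↑),
    hF.con.mk'_surjective, fun _ _ => rfl, fun _ _ => rfl, fun _ _ => rfl, fun _ _ => rfl, rfl,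
    hg, hx⟩
end

section
/- Let X be a type equipped with a reflexive and transitive relation ≼, a predicate Fin : X → Prop, and a function c : X → ℕ such that for all A, B ∈ X: if Fin B, A ≼ B and ¬(B ≼ A), then Fin A and c(A) < c(B). Let K ⊆ K' be subsets of X. Then the following are equivalent: (1) there exists a set S ⊆ K' with Fin A for every A ∈ S such that K = {B ∈ K' : for all A ∈ S, ¬(A ≼ B)}; (2) both (a) for all A, B ∈ K', if A ≼ B and B ∈ K then A ∈ K, and (b) for every B ∈ K' \ K there exists A ∈ K' \ K with Fin A and A ≼ B. -/
section aboveNone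

variable {X : Type*} {r : X → X → Prop}

/-- In the paper's reading: the members of `K'` satisfying every formula `ζ(A)`, `A ∈ S`. -/
def aboveNone (r : X → X → Prop) (S K' : Set X) : Set X :=
  {B ∈ K' | ∀ A ∈ S, ¬ r A B}

theorem aboveNone_mem_of_rel (htrans : ∀ a b c : X, r a b → r b c → r a c) {S K' : Set X}
    {A B : X} (hA : A ∈ K') (hB : B ∈ aboveNone r S K') (hAB : r A B) :
    A ∈ aboveNone r S K' :=
  ⟨hA, fun A₀ hA₀ hA₀A => hB.2 A₀ hA₀ (htrans A₀ A B hA₀A hAB)⟩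

theorem not_mem_aboveNone_of_mem (hrefl : ∀ a : X, r a a) {S K' : Set X} {A : X}
    (hA : A ∈ S) : A ∉ aboveNone r S K' :=
  fun h => h.2 A hA (hrefl A)

theorem exists_mem_rel_of_not_mem_aboveNone {S K' : Set X} {B : X} (hB : B ∈ K')
    (hB' : B ∉ aboveNone r S K') : ∃ A ∈ S, r A B := by
  by_contra! h
  exact hB' ⟨hB, h⟩

theorem eq_aboveNone_of_forall_exists_rel {p : X → Prop} {K K' : Set X} (hKK' : K ⊆ K')
    (hdown : ∀ A ∈ K', ∀ B ∈ K', r A B → B ∈ K → A ∈ K)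
    (hbelow : ∀ B ∈ K' \ K, ∃ A ∈ K' \ K, p A ∧ r A B) :
    K = aboveNone r {A | A ∈ K' \ K ∧ p A} K' := by
  ext B
  constructor
  · intro hBK
    exact ⟨hKK' hBK, fun A hA hAB => hA.1.2 (hdown A hA.1.1 B (hKK' hBK) hAB hBK)⟩
  · rintro ⟨hBK', hB⟩
    by_contra hBK
    obtain ⟨A, hA, hpA, hAB⟩ := hbelow B ⟨hBK', hBK⟩
    exact hB A ⟨hA, hpA⟩ hAB

end aboveNone

theorem stmt14_general {X : Type*} (r : X → X → Prop)
    (hrefl : ∀ a : X, r a a) (htrans : ∀ a b c : X, r a b → r b c → r a c)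
    (fin : X → Prop) (c : X → ℕ)
    (K K' : Set X) (hKK' : K ⊆ K') :
    (∃ S : Set X, S ⊆ K' ∧ (∀ A ∈ S, fin A) ∧
        K = {B ∈ K' | ∀ A ∈ S, ¬ r A B}) ↔
      ((∀ A ∈ K', ∀ B ∈ K', r A B → B ∈ K → A ∈ K) ∧
        (∀ B ∈ K' \ K, ∃ A ∈ K' \ K, fin A ∧ r A B)) := by
  constructor
  · rintro ⟨S, hSK', hSfin, hK⟩
    change K = aboveNone r S K' at hK
    subst hK
    refine ⟨fun A hA B _ hAB hB => aboveNone_mem_of_rel htrans hA hB hAB, ?_⟩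
    rintro B ⟨hBK', hBK⟩
    obtain ⟨A, hAS, hAB⟩ := exists_mem_rel_of_not_mem_aboveNone hBK' hBK
    exact ⟨A, ⟨hSK' hAS, not_mem_aboveNone_of_mem hrefl hAS⟩, hSfin A hAS, hAB⟩
  · rintro ⟨hdown, hbelow⟩
    exact ⟨{A | A ∈ K' \ K ∧ fin A}, fun A hA => hA.1.1, fun A hA => hA.2,
      eq_aboveNone_of_forall_exists_rel hKK' hdown hbelow⟩

theorem stmt14 {X : Type*} (r : X → X → Prop)
    (hrefl : ∀ a : X, r a a) (htrans : ∀ a b c : X, r a b → r b c → r a c)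
    (fin : X → Prop) (c : X → ℕ)
    (hord : ∀ A B : X, fin B → r A B → ¬ r B A → fin A ∧ c A < c B)
    (K K' : Set X) (hKK' : K ⊆ K') :
    (∃ S : Set X, S ⊆ K' ∧ (∀ A ∈ S, fin A) ∧
        K = {B ∈ K' | ∀ A ∈ S, ¬ r A B}) ↔
      ((∀ A ∈ K', ∀ B ∈ K', r A B → B ∈ K → A ∈ K) ∧
        (∀ B ∈ K' \ K, ∃ A ∈ K' \ K, fin A ∧ r A B)) :=
  stmt14_general r hrefl htrans fin c K K' hKK'
end

section
/- Let k ≥ 1 and let A be a k-potent commutative integral residuated lattice. Then there is a k-potent commutative integral residuated lattice structure on WithBot A (the type A with a new element ⊥ adjoined) such that: ⊥ is the least element; the canonical inclusion A → WithBot A preserves ·, ∧, ∨, →, and 1; and ⊥·x = ⊥ for all x. -/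
/-- `⊥` is absorbing: this is the multiplication of `WithZero M`, which is also `Option M`. -/
abbrev WithBot.absorbingCommMonoid (M : Type*) [CommMonoid M] : CommMonoid (WithBot M) :=
  inferInstanceAs (CommMonoid (WithZero M))

namespace WithBot.Absorbing

variable {M : Type*} [CommMonoid M]

attribute [local instance] absorbingCommMonoid

theorem bot_mul (x : WithBot M) : (⊥ : WithBot M) * x = ⊥ := rfl

theorem mul_bot (x : WithBot M) : x * (⊥ : WithBot M) = ⊥ := by
  induction x <;> rfl

theorem coe_mul (a b : M) : ((a * b : M) : WithBot M) = a * b := rfl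

theorem pow_succ_eq_pow {k : ℕ} (hk : 1 ≤ k) (hpot : ∀ a : M, a ^ (k + 1) = a ^ k)
    (x : WithBot M) : x ^ (k + 1) = x ^ k := by
  induction x with
  | bot => obtain ⟨m, rfl⟩ := Nat.exists_eq_add_of_le' hk; rfl
  | coe a => exact congrArg some (hpot a)

end WithBot.Absorbing

namespace CIRL

variable {A : Type*} [CIRL A]

def withBotHImp : WithBot A → WithBot A → WithBot A
  | ⊥, _ => ↑(1 : A)
  | (_ : A), ⊥ => ⊥
  | (a : A), (b : A) => ↑(a ⇨ b)

theorem withBot_le_one (x : WithBot A) : x ≤ ↑(1 : A) := by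
  induction x with
  | bot => exact bot_le
  | coe a => exact WithBot.coe_le_coe.2 (le_one a)

attribute [local instance] WithBot.absorbingCommMonoid

theorem withBot_residuation (x y z : WithBot A) : x * y ≤ z ↔ y ≤ withBotHImp x z := by
  induction x with
  | bot => simpa [WithBot.Absorbing.bot_mul, withBotHImp] using withBot_le_one y
  | coe a =>
    induction y with
    | bot => simp [WithBot.Absorbing.mul_bot]
    | coe b =>
      induction z with
      | bot => simp [withBotHImp, ← WithBot.Absorbing.coe_mul]
      | coe c => simpa [withBotHImp, ← WithBot.Absorbing.coe_mul] using residuation a b c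

/-- The ordinal sum `2 ⊕ A`. -/
abbrev withBot : CIRL (WithBot A) :=
  { WithBot.absorbingCommMonoid A, WithBot.lattice with
    himp := withBotHImp
    residuation := withBot_residuation
    le_one := withBot_le_one }

end CIRL

theorem stmt15 {A : Type*} [CIRL A] (k : ℕ) (hk : 1 ≤ k)
    (hpot : ∀ x : A, x ^ (k + 1) = x ^ k) :
    ∃ inst : CIRL (WithBot A),
      letI := inst
      (∀ x : WithBot A, x ^ (k + 1) = x ^ k) ∧
      (∀ x : WithBot A, (⊥ : WithBot A) ≤ x) ∧
      (∀ a b : A, ((a * b : A) : WithBot A) = (a : WithBot A) * (b : WithBot A)) ∧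
      (∀ a b : A, ((a ⊓ b : A) : WithBot A) = (a : WithBot A) ⊓ (b : WithBot A)) ∧
      (∀ a b : A, ((a ⊔ b : A) : WithBot A) = (a : WithBot A) ⊔ (b : WithBot A)) ∧
      (∀ a b : A, ((a ⇨ b : A) : WithBot A) = (a : WithBot A) ⇨ (b : WithBot A)) ∧
      (((1 : A) : WithBot A) = 1) ∧
      (∀ x : WithBot A, (⊥ : WithBot A) * x = ⊥) := by
  exact ⟨CIRL.withBot, WithBot.Absorbing.pow_succ_eq_pow hk hpot, fun _ => bot_le,
    WithBot.Absorbing.coe_mul, WithBot.coe_inf, WithBot.coe_sup, fun _ _ => rfl, rfl,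
    WithBot.Absorbing.bot_mul⟩
end

section
/- Let k ≥ 1, let A be a finite totally ordered k-potent commutative integral residuated lattice, and let h be a natural number with h ≥ |A|. Then there exist a totally ordered k-potent commutative integral residuated lattice B with exactly h elements and an injective map A → B preserving ·, ∧, ∨, →, and 1. -/
universe u

/-!
Glue a chain `ι` of idempotents below `A` (an ordinal sum of a Gödel chain and `A`): on `ι`
the product is `min` and `i ⇨ j` is `1` or `j`, and every element of `ι` absorbs every
element of `A`. This is again a residuated lattice, totally ordered and `k`-potent (`k ≥ 1`)
whenever `A` is, with `A` as a subalgebra; `ι = Fin (h - |A|)` gives `h` elements.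
-/

inductive ChainExt (ι : Type*) (A : Type u)
  | chain : ι → ChainExt ι A
  | of : A → ChainExt ι A

namespace ChainExt

variable {ι : Type*} {A : Type u}

def equivSum : ChainExt ι A ≃ ι ⊕ A where
  toFun
    | chain i => .inl i
    | of a => .inr a
  invFun
    | .inl i => chain i
    | .inr a => of a
  left_inv x := by cases x <;> rfl
  right_inv x := by cases x <;> rfl

theorem natCard_eq [Finite ι] [Finite A] :
    Nat.card (ChainExt ι A) = Nat.card ι + Nat.card A := by
  rw [Nat.card_congr equivSum, Nat.card_sum]

theorem of_injective : Function.Injective (of : A → ChainExt ι A) :=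
  fun _ _ h => by injection h

section Order

variable [LinearOrder ι] [Lattice A]

protected def le : ChainExt ι A → ChainExt ι A → Prop
  | chain i, chain j => i ≤ j
  | chain _, of _ => True
  | of _, chain _ => False
  | of a, of b => a ≤ b

instance : LE (ChainExt ι A) := ⟨ChainExt.le⟩

@[simp] theorem chain_le_chain {i j : ι} : (chain i : ChainExt ι A) ≤ chain j ↔ i ≤ j :=
  Iff.rfl

@[simp] theorem chain_le_of (i : ι) (a : A) : (chain i : ChainExt ι A) ≤ of a := trivial

@[simp] theorem not_of_le_chain (a : A) (i : ι) : ¬(of a : ChainExt ι A) ≤ chain i :=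
  id

@[simp] theorem of_le_of {a b : A} : (of a : ChainExt ι A) ≤ of b ↔ a ≤ b := Iff.rfl

instance : Lattice (ChainExt ι A) where
  le := (· ≤ ·)
  le_refl x := by cases x <;> simp
  le_trans x y z := by
    cases x <;> cases y <;> cases z <;> simp <;> exact le_trans
  le_antisymm x y := by
    cases x <;> cases y <;> simp <;> exact le_antisymm
  inf
    | chain i, chain j => chain (min i j)
    | chain i, of _ => chain i
    | of _, chain j => chain j
    | of a, of b => of (a ⊓ b)
  sup
    | chain i, chain j => chain (max i j)
    | chain _, of b => of b
    | of a, chain _ => of a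
    | of a, of b => of (a ⊔ b)
  inf_le_left x y := by cases x <;> cases y <;> simp
  inf_le_right x y := by cases x <;> cases y <;> simp
  le_inf x y z := by cases x <;> cases y <;> cases z <;> simp_all
  le_sup_left x y := by cases x <;> cases y <;> simp
  le_sup_right x y := by cases x <;> cases y <;> simp
  sup_le x y z := by cases x <;> cases y <;> cases z <;> simp_all

theorem le_total_of_le_total (htot : ∀ a b : A, a ≤ b ∨ b ≤ a) (x y : ChainExt ι A) :
    x ≤ y ∨ y ≤ x := by
  cases x <;> cases y <;> simp [le_total, htot]

end Order

instance [One A] : One (ChainExt ι A) := ⟨of 1⟩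

@[simp] theorem of_one [One A] : (of 1 : ChainExt ι A) = 1 := rfl

section Monoid

variable [LinearOrder ι] [CommMonoid A]

instance : Mul (ChainExt ι A) where
  mul
    | chain i, chain j => chain (min i j)
    | chain i, of _ => chain i
    | of _, chain j => chain j
    | of a, of b => of (a * b)

@[simp] theorem chain_mul_chain (i j : ι) :
    (chain i * chain j : ChainExt ι A) = chain (min i j) := rfl

@[simp] theorem chain_mul_of (i : ι) (a : A) : (chain i * of a : ChainExt ι A) = chain i :=
  rfl

@[simp] theorem of_mul_chain (a : A) (i : ι) : (of a * chain i : ChainExt ι A) = chain i :=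
  rfl

@[simp] theorem of_mul_of (a b : A) : (of a * of b : ChainExt ι A) = of (a * b) := rfl

instance : CommMonoid (ChainExt ι A) where
  mul_assoc x y z := by cases x <;> cases y <;> cases z <;> simp [min_assoc, mul_assoc]
  one_mul x := by cases x <;> simp [← of_one]
  mul_one x := by cases x <;> simp [← of_one]
  mul_comm x y := by cases x <;> cases y <;> simp [min_comm, mul_comm]

@[simp] theorem of_pow (a : A) (n : ℕ) : (of a : ChainExt ι A) ^ n = of (a ^ n) := by
  induction n with
  | zero => rw [pow_zero, pow_zero, of_one]
  | succ n ih => rw [pow_succ, ih, of_mul_of, pow_succ]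

@[simp] theorem chain_pow (i : ι) {n : ℕ} (hn : n ≠ 0) :
    (chain i : ChainExt ι A) ^ n = chain i := by
  induction n with
  | zero => exact absurd rfl hn
  | succ n ih =>
    rcases eq_or_ne n 0 with rfl | hn'
    · exact pow_one _
    · rw [pow_succ, ih hn', chain_mul_chain, min_self]

theorem pow_succ_eq_pow {k : ℕ} (hk : k ≠ 0) (hpot : ∀ a : A, a ^ (k + 1) = a ^ k)
    (x : ChainExt ι A) : x ^ (k + 1) = x ^ k := by
  cases x with
  | chain i => rw [chain_pow i hk, chain_pow i k.succ_ne_zero]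
  | of a => rw [of_pow, of_pow, hpot]

end Monoid

section Residuated

variable [LinearOrder ι] [CIRL A]

instance : HImp (ChainExt ι A) where
  himp
    | chain i, chain j => if i ≤ j then 1 else chain j
    | chain _, of _ => 1
    | of _, chain j => chain j
    | of a, of b => of (a ⇨ b)

theorem chain_himp_chain (i j : ι) :
    (chain i ⇨ chain j : ChainExt ι A) = if i ≤ j then 1 else chain j := rfl

@[simp] theorem chain_himp_of (i : ι) (a : A) : (chain i ⇨ of a : ChainExt ι A) = 1 := rfl

@[simp] theorem of_himp_chain (a : A) (j : ι) : (of a ⇨ chain j : ChainExt ι A) = chain j :=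
  rfl

@[simp] theorem of_himp_of (a b : A) : (of a ⇨ of b : ChainExt ι A) = of (a ⇨ b) := rfl

theorem le_one (x : ChainExt ι A) : x ≤ 1 := by
  cases x
  · exact chain_le_of _ _
  · exact of_le_of.mpr (CIRL.le_one _)

theorem residuation (x y z : ChainExt ι A) : x * y ≤ z ↔ y ≤ x ⇨ z := by
  cases x with
  | chain i =>
    cases z with
    | chain k =>
      rw [chain_himp_chain]
      split_ifs with hik
      · refine iff_of_true ?_ (le_one y)
        cases y <;> simp [min_le_of_left_le hik, hik]
      · cases y <;> simp [hik]
    | of c =>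
      rw [chain_himp_of]
      exact iff_of_true (by cases y <;> simp) (le_one y)
  | of a => cases y <;> cases z <;> simp [CIRL.residuation]

instance : CIRL (ChainExt ι A) where
  residuation := residuation
  le_one := le_one

end Residuated

end ChainExt

theorem stmt17 {A : Type u} [CIRL A] [Fintype A] (k : ℕ) (hk : 1 ≤ k)
    (hpot : ∀ x : A, x ^ (k + 1) = x ^ k)
    (htot : ∀ x y : A, x ≤ y ∨ y ≤ x)
    (h : ℕ) (hh : Fintype.card A ≤ h) :
    ∃ (B : Type u) (inst : CIRL B),
      letI := inst
      (∀ x : B, x ^ (k + 1) = x ^ k) ∧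
      (∀ x y : B, x ≤ y ∨ y ≤ x) ∧
      Nat.card B = h ∧
      ∃ f : A → B, Function.Injective f ∧
        (∀ a b : A, f (a * b) = f a * f b) ∧
        (∀ a b : A, f (a ⊓ b) = f a ⊓ f b) ∧
        (∀ a b : A, f (a ⊔ b) = f a ⊔ f b) ∧
        (∀ a b : A, f (a ⇨ b) = f a ⇨ f b) ∧
        f 1 = 1 := by
  refine ⟨ChainExt (Fin (h - Fintype.card A)) A, inferInstance,
    ChainExt.pow_succ_eq_pow (by omega) hpot, ChainExt.le_total_of_le_total htot, ?_,
    ChainExt.of, ChainExt.of_injective, fun _ _ => rfl, fun _ _ => rfl, fun _ _ => rfl,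
    fun _ _ => rfl, rfl⟩
  rw [ChainExt.natCard_eq, Nat.card_eq_fintype_card, Nat.card_eq_fintype_card,
    Fintype.card_fin]
  omega
end
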